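/- arXiv:2107.08468 — 9 statements merged into one kernel-verified Lean document; each statement's English description precedes it below -/
import Mathlib

section
/- (Fundamental theorem, existence of basic feasible solutions.) Consider the constraint system A_E *ᵥ x = b_E, A_I *ᵥ x ≥ b_I, ℓ ≤ x ≤ u. Combine all constraint rows into the family r : (Fin m ⊕ Fin n ⊕ Fin d ⊕ Fin d) → (Fin d → ℝ) where r assigns to the first summand the rows of A_E, to the second summand the rows of A_I, to the third summand the standard basis vectors e_i (for the lower bounds x_i ≥ ℓ_i), and to the fourth summand the vectors −e_i (for the upper bounds −x_i ≥ −u_i), with corresponding right-hand sides β given by b_E, b_I, ℓ, and −u. Call a vector x a basic solution if there exists a finset S of indices with S.card = d such that the family of rows (r s)_{s ∈ S} is linearly independent over ℝ and r s ⬝ᵥ x = β s for every s ∈ S. If the system has a feasible solution (some x with A_E *ᵥ x = b_E, A_I *ᵥ x ≥ b_I, ℓ ≤ x ≤ u), then it has a basic feasible solution (a feasible x that is also basic). -/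
/-!
Write every constraint as an inequality `r s ⬝ᵥ x ≥ β s`. Since the rows `eᵢ` span the whole
space, a feasible point whose active rows do not span can be moved along a nonzero direction
orthogonal to them, with the sign chosen so that some row decreases, until a new constraint
becomes tight (the ratio test). Active rows stay active and the span of the active rows grows
strictly, so a feasible point whose active span is maximal has active rows spanning the space,
and any basis among them is the required `S`. The equalities `A_E x = b_E` are rows active at
the given feasible point, hence also at the one obtained.
-/

open Matrix Submodule Set

section Polyhedron

variable {𝕜 : Type*} [Field 𝕜] {ι κ : Type*} [Fintype κ]

theorem dotProduct_add_smul (v x c : κ → 𝕜) (t : 𝕜) :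
    v ⬝ᵥ (x + t • c) = v ⬝ᵥ x + t * (v ⬝ᵥ c) := by
  rw [dotProduct_add, dotProduct_smul, smul_eq_mul]

theorem exists_ne_zero_forall_dotProduct_eq_zero {W : Submodule 𝕜 (κ → 𝕜)} (hW : W ≠ ⊤) :
    ∃ c ≠ 0, ∀ w ∈ W, w ⬝ᵥ c = 0 := by
  classical
  obtain ⟨f, hf, hfW⟩ := exists_dual_map_eq_bot_of_lt_top hW.lt_top inferInstance
  set c : κ → 𝕜 := fun i => f fun j => if i = j then 1 else 0
  have hfc : ∀ w, f w = w ⬝ᵥ c := f.pi_apply_eq_sum_univ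
  refine ⟨c, fun hc => hf (LinearMap.ext fun w => by simp [hfc, hc]), fun w hw => ?_⟩
  rw [← hfc, ← Submodule.mem_bot 𝕜, ← hfW]
  exact mem_map_of_mem hw

theorem exists_dotProduct_ne_zero_of_span_eq_top {r : ι → κ → 𝕜}
    (hspan : span 𝕜 (range r) = ⊤) {c : κ → 𝕜} (hc : c ≠ 0) : ∃ s, r s ⬝ᵥ c ≠ 0 := by
  classical
  by_contra! h
  have hW : ∀ w ∈ span 𝕜 (range r), w ⬝ᵥ c = 0 := fun w hw => by
    induction hw using Submodule.span_induction with
    | mem w hw => obtain ⟨s, rfl⟩ := hw; exact h s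
    | zero => exact zero_dotProduct c
    | add v w _ _ hv hw => rw [add_dotProduct, hv, hw, add_zero]
    | smul a w _ hw => rw [smul_dotProduct, hw, smul_zero]
  exact hc (funext fun i => by
    simpa [single_one_dotProduct] using hW _ (hspan ▸ mem_top : Pi.single i 1 ∈ _))

theorem exists_finset_linearIndependent_of_span_image_eq_top {r : ι → κ → 𝕜} {T : Set ι}
    (hT : span 𝕜 (r '' T) = ⊤) :
    ∃ S : Finset ι, S.card = Fintype.card κ ∧ LinearIndependent 𝕜 (fun s : S => r s) ∧
      ↑S ⊆ T := by
  obtain ⟨b, hbT, -, hTb, hb⟩ :=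
    exists_linearIndepOn_extension (linearIndepOn_empty 𝕜 r) (empty_subset T)
  have hfin : b.Finite := hb.finite
  have hli : LinearIndepOn 𝕜 r ↑hfin.toFinset := by rwa [hfin.coe_toFinset]
  have hsp : ⊤ ≤ span 𝕜 (range fun s : (hfin.toFinset : Set ι) => r s) := by
    rw [← image_eq_range, hfin.coe_toFinset, ← hT]
    exact span_le.2 hTb
  refine ⟨hfin.toFinset, ?_, hli, by rwa [hfin.coe_toFinset]⟩
  rw [← Module.finrank_fintype_fun_eq_card (R := 𝕜),
    Module.finrank_eq_card_basis (Module.Basis.mk hli hsp)]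
  simp

def activeSet (r : ι → κ → 𝕜) (β : ι → 𝕜) (x : κ → 𝕜) : Set ι :=
  {s | r s ⬝ᵥ x = β s}

variable [LinearOrder 𝕜] [IsStrictOrderedRing 𝕜]

theorem exists_feasible_add_smul_mem_activeSet [Finite ι] {r : ι → κ → 𝕜} {β : ι → 𝕜}
    {x c : κ → 𝕜} (hx : ∀ s, β s ≤ r s ⬝ᵥ x) (hc : ∃ s, r s ⬝ᵥ c < 0) :
    ∃ t : 𝕜, (∀ s, β s ≤ r s ⬝ᵥ (x + t • c)) ∧
      ∃ s₀, r s₀ ⬝ᵥ c < 0 ∧ s₀ ∈ activeSet r β (x + t • c) := by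
  let ratio s := (r s ⬝ᵥ x - β s) / -(r s ⬝ᵥ c)
  obtain ⟨s₀, hs₀ : r s₀ ⬝ᵥ c < 0, hmin⟩ :=
    Set.exists_min_image {s | r s ⬝ᵥ c < 0} ratio (Set.toFinite _) hc
  have ht : 0 ≤ ratio s₀ := div_nonneg (sub_nonneg.2 (hx s₀)) (neg_nonneg.2 hs₀.le)
  refine ⟨ratio s₀, fun s => ?_, s₀, hs₀, ?_⟩
  · rw [dotProduct_add_smul]
    rcases lt_or_ge (r s ⬝ᵥ c) 0 with hneg | hnonneg
    · have := (le_div_iff₀ (neg_pos.2 hneg)).1 (hmin s hneg)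
      linarith
    · linarith [hx s, mul_nonneg ht hnonneg]
  · have : ratio s₀ * (r s₀ ⬝ᵥ c) = β s₀ - r s₀ ⬝ᵥ x := by
      have hne := hs₀.ne
      simp only [ratio]
      field_simp
      ring
    simp only [activeSet, mem_ofPred_eq, dotProduct_add_smul, this]
    ring

theorem exists_feasible_span_activeSet_gt [Finite ι] {r : ι → κ → 𝕜} {β : ι → 𝕜}
    (hspan : span 𝕜 (range r) = ⊤) {y : κ → 𝕜} (hy : ∀ s, β s ≤ r s ⬝ᵥ y)
    (hW : span 𝕜 (r '' activeSet r β y) ≠ ⊤) :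
    ∃ z, (∀ s, β s ≤ r s ⬝ᵥ z) ∧ activeSet r β y ⊆ activeSet r β z ∧
      span 𝕜 (r '' activeSet r β y) < span 𝕜 (r '' activeSet r β z) := by
  obtain ⟨c, hc0, hcW⟩ := exists_ne_zero_forall_dotProduct_eq_zero hW
  obtain ⟨s₁, hs₁⟩ := exists_dotProduct_ne_zero_of_span_eq_top hspan hc0
  obtain ⟨c', hc'W, hc'⟩ : ∃ c' : κ → 𝕜, (∀ w ∈ span 𝕜 (r '' activeSet r β y), w ⬝ᵥ c' = 0) ∧
      ∃ s, r s ⬝ᵥ c' < 0 := by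
    rcases hs₁.lt_or_gt with h | h
    · exact ⟨c, hcW, s₁, h⟩
    · exact ⟨-c, fun w hw => by rw [dotProduct_neg, hcW w hw, neg_zero], s₁,
        by rwa [dotProduct_neg, neg_lt_zero]⟩
  obtain ⟨t, hz, s₀, hs₀, hs₀z⟩ := exists_feasible_add_smul_mem_activeSet hy hc'
  have hsub : activeSet r β y ⊆ activeSet r β (y + t • c') := fun s hs => by
    simp only [activeSet, mem_ofPred_eq, dotProduct_add_smul,
      hc'W _ (subset_span (mem_image_of_mem r hs)), mul_zero, add_zero] at hs ⊢
    exact hs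
  refine ⟨_, hz, hsub, (span_mono (image_mono hsub)).lt_of_ne fun heq => hs₀.ne ?_⟩
  exact hc'W _ (heq ▸ subset_span (mem_image_of_mem r hs₀z))

theorem exists_feasible_activeSet_subset_span_eq_top [Finite ι] {r : ι → κ → 𝕜} {β : ι → 𝕜}
    (hspan : span 𝕜 (range r) = ⊤) {x : κ → 𝕜} (hx : ∀ s, β s ≤ r s ⬝ᵥ x) :
    ∃ y, (∀ s, β s ≤ r s ⬝ᵥ y) ∧ activeSet r β x ⊆ activeSet r β y ∧
      span 𝕜 (r '' activeSet r β y) = ⊤ := by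
  obtain ⟨y, ⟨hy, hxy⟩, hmax⟩ :=
    (InvImage.wf (fun y => span 𝕜 (r '' activeSet r β y)) wellFounded_gt).has_min
      {y | (∀ s, β s ≤ r s ⬝ᵥ y) ∧ activeSet r β x ⊆ activeSet r β y} ⟨x, hx, subset_rfl⟩
  refine ⟨y, hy, hxy, by_contra fun htop => ?_⟩
  obtain ⟨z, hz, hyz, hlt⟩ := exists_feasible_span_activeSet_gt hspan hy htop
  exact hmax z ⟨hz, hxy.trans hyz⟩ hlt

end Polyhedron

section ConstraintSystem

variable {𝕜 : Type*} [Field 𝕜] {m n κ : Type*} [Fintype κ] [DecidableEq κ]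

def constraintRows (A_E : Matrix m κ 𝕜) (A_I : Matrix n κ 𝕜) : m ⊕ n ⊕ κ ⊕ κ → κ → 𝕜 :=
  Sum.elim (fun i => A_E i)
    (Sum.elim (fun j => A_I j) (Sum.elim (fun i => Pi.single i 1) (fun i => -Pi.single i 1)))

def constraintRhs (b_E : m → 𝕜) (b_I : n → 𝕜) (ℓ u : κ → 𝕜) : m ⊕ n ⊕ κ ⊕ κ → 𝕜 :=
  Sum.elim b_E (Sum.elim b_I (Sum.elim ℓ (fun i => -u i)))

theorem span_range_constraintRows (A_E : Matrix m κ 𝕜) (A_I : Matrix n κ 𝕜) :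
    span 𝕜 (range (constraintRows A_E A_I)) = ⊤ := by
  refine eq_top_iff.2 ((Pi.basisFun 𝕜 κ).span_eq.ge.trans (span_mono ?_))
  rintro _ ⟨i, rfl⟩
  exact ⟨.inr (.inr (.inl i)), by simp [constraintRows]⟩

theorem le_constraintRows_dotProduct_iff [LinearOrder 𝕜] [IsStrictOrderedRing 𝕜]
    {A_E : Matrix m κ 𝕜} {A_I : Matrix n κ 𝕜} {b_E : m → 𝕜} {b_I : n → 𝕜} {ℓ u x : κ → 𝕜} :
    (∀ s, constraintRhs b_E b_I ℓ u s ≤ constraintRows A_E A_I s ⬝ᵥ x) ↔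
      b_E ≤ A_E *ᵥ x ∧ b_I ≤ A_I *ᵥ x ∧ ℓ ≤ x ∧ x ≤ u := by
  simp [Sum.forall, constraintRows, constraintRhs, Pi.le_def, mulVec, single_dotProduct]

end ConstraintSystem

theorem facet_basic_feasible_exists (d m n : ℕ)
    (A_E : Matrix (Fin m) (Fin d) ℝ) (A_I : Matrix (Fin n) (Fin d) ℝ)
    (b_E : Fin m → ℝ) (b_I : Fin n → ℝ) (ℓ u : Fin d → ℝ)
    (r : Fin m ⊕ Fin n ⊕ Fin d ⊕ Fin d → Fin d → ℝ)
    (β : Fin m ⊕ Fin n ⊕ Fin d ⊕ Fin d → ℝ)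
    (hr : r = Sum.elim (fun i => A_E i)
          (Sum.elim (fun j => A_I j)
            (Sum.elim (fun i => Pi.single i (1 : ℝ))
              (fun i => -Pi.single i (1 : ℝ)))))
    (hβ : β = Sum.elim b_E (Sum.elim b_I (Sum.elim ℓ (fun i => -u i))))
    (hfeas : ∃ x : Fin d → ℝ, A_E *ᵥ x = b_E ∧ A_I *ᵥ x ≥ b_I ∧ ℓ ≤ x ∧ x ≤ u) :
    ∃ x : Fin d → ℝ,
      (A_E *ᵥ x = b_E ∧ A_I *ᵥ x ≥ b_I ∧ ℓ ≤ x ∧ x ≤ u) ∧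
      (∃ S : Finset (Fin m ⊕ Fin n ⊕ Fin d ⊕ Fin d),
        S.card = d ∧
        LinearIndependent ℝ (fun s : S => r s) ∧
        ∀ s ∈ S, r s ⬝ᵥ x = β s) := by
  obtain ⟨x₀, hE, hI, hl, hu⟩ := hfeas
  obtain rfl : r = constraintRows A_E A_I := hr
  obtain rfl : β = constraintRhs b_E b_I ℓ u := hβ
  obtain ⟨x, hx, hx₀x, hspan⟩ := exists_feasible_activeSet_subset_span_eq_top
    (span_range_constraintRows A_E A_I) (le_constraintRows_dotProduct_iff.2 ⟨hE.ge, hI, hl, hu⟩)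
  obtain ⟨-, hI', hl', hu'⟩ := le_constraintRows_dotProduct_iff.1 hx
  obtain ⟨S, hcard, hli, hS⟩ := exists_finset_linearIndependent_of_span_image_eq_top hspan
  exact ⟨x, ⟨funext fun i => @hx₀x (.inl i) (congrFun hE i), hI', hl', hu'⟩,
    S, hcard.trans (Fintype.card_fin d), hli, fun s hs => hS hs⟩
end

section
/- (Redundant inequality constraint.) Suppose the row a_r : Fin d → ℝ satisfies a_r = A_E0ᵀ *ᵥ y_E + A_I0ᵀ *ᵥ y_I for some y_E : Fin m₀ → ℝ and some y_I : Fin i₀ → ℝ with 0 ≤ y_I, and suppose x is a basic solution (A_E0 *ᵥ x = b_E0 and A_I0 *ᵥ x = b_I0) with a_r ⬝ᵥ x > b_r. Then the inequality constraint a_r ⬝ᵥ · ≥ b_r is redundant: every feasible x̄ (A_E0 *ᵥ x̄ = b_E0 and A_I0 *ᵥ x̄ ≥ b_I0) satisfies a_r ⬝ᵥ x̄ > b_r. -/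
open Matrix

theorem facet_redundant_inequality (d m₀ i₀ : ℕ)
    (A_E0 : Matrix (Fin m₀) (Fin d) ℝ) (A_I0 : Matrix (Fin i₀) (Fin d) ℝ)
    (b_E0 : Fin m₀ → ℝ) (b_I0 : Fin i₀ → ℝ) (a_r : Fin d → ℝ) (b_r : ℝ)
    (y_E : Fin m₀ → ℝ) (y_I : Fin i₀ → ℝ) (hyI : 0 ≤ y_I)
    (har : a_r = A_E0ᵀ *ᵥ y_E + A_I0ᵀ *ᵥ y_I)
    (x : Fin d → ℝ) (hxE : A_E0 *ᵥ x = b_E0) (hxI : A_I0 *ᵥ x = b_I0)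
    (hxr : a_r ⬝ᵥ x > b_r) :
    ∀ xbar : Fin d → ℝ, A_E0 *ᵥ xbar = b_E0 → A_I0 *ᵥ xbar ≥ b_I0 →
      a_r ⬝ᵥ xbar > b_r := by
  intro xbar hE hI
  have key : ∀ z : Fin d → ℝ, a_r ⬝ᵥ z = y_E ⬝ᵥ (A_E0 *ᵥ z) + y_I ⬝ᵥ (A_I0 *ᵥ z) := by
    intro z
    rw [har, add_dotProduct, mulVec_transpose, mulVec_transpose,
      ← dotProduct_mulVec, ← dotProduct_mulVec]
  have h1 : y_I ⬝ᵥ b_I0 ≤ y_I ⬝ᵥ (A_I0 *ᵥ xbar) := by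
    apply Finset.sum_le_sum
    intro i _
    exact mul_le_mul_of_nonneg_left (hI i) (hyI i)
  have h2 := key x
  have h3 := key xbar
  rw [hxE, hxI] at h2
  rw [hE] at h3
  linarith
end

section
/- (Infeasibility certificate, case 1.) Suppose the entering row a_p : Fin d → ℝ satisfies a_p = A_E0ᵀ *ᵥ y_E − A_I0ᵀ *ᵥ y_I for some y_E : Fin m₀ → ℝ and some y_I : Fin i₀ → ℝ with 0 ≤ y_I, and suppose x is a basic solution (A_E0 *ᵥ x = b_E0 and A_I0 *ᵥ x = b_I0) with a_p ⬝ᵥ x < b_p. Then there is no x̄ : Fin d → ℝ satisfying A_E0 *ᵥ x̄ = b_E0, A_I0 *ᵥ x̄ ≥ b_I0, and a_p ⬝ᵥ x̄ ≥ b_p; in particular, the linear program containing these constraints (with a_p ⬝ᵥ x̄ ≥ b_p or a_p ⬝ᵥ x̄ = b_p) has no feasible solution. -/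
open Matrix

theorem facet_infeasible_case1 (d m₀ i₀ : ℕ)
    (A_E0 : Matrix (Fin m₀) (Fin d) ℝ) (A_I0 : Matrix (Fin i₀) (Fin d) ℝ)
    (b_E0 : Fin m₀ → ℝ) (b_I0 : Fin i₀ → ℝ) (a_p : Fin d → ℝ) (b_p : ℝ)
    (y_E : Fin m₀ → ℝ) (y_I : Fin i₀ → ℝ) (hyI : 0 ≤ y_I)
    (hap : a_p = A_E0ᵀ *ᵥ y_E - A_I0ᵀ *ᵥ y_I)
    (x : Fin d → ℝ) (hxE : A_E0 *ᵥ x = b_E0) (hxI : A_I0 *ᵥ x = b_I0)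
    (hxp : a_p ⬝ᵥ x < b_p) :
    ¬ ∃ xbar : Fin d → ℝ, A_E0 *ᵥ xbar = b_E0 ∧ A_I0 *ᵥ xbar ≥ b_I0 ∧
      a_p ⬝ᵥ xbar ≥ b_p := by
  rintro ⟨z, hzE, hzI, hzp⟩
  have key : ∀ v : Fin d → ℝ,
      a_p ⬝ᵥ v = y_E ⬝ᵥ (A_E0 *ᵥ v) - y_I ⬝ᵥ (A_I0 *ᵥ v) := by
    intro v
    rw [hap, sub_dotProduct, Matrix.mulVec_transpose, Matrix.mulVec_transpose,
      ← Matrix.dotProduct_mulVec, ← Matrix.dotProduct_mulVec]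
  have hx : a_p ⬝ᵥ x = y_E ⬝ᵥ b_E0 - y_I ⬝ᵥ b_I0 := by rw [key, hxE, hxI]
  have hz : a_p ⬝ᵥ z = y_E ⬝ᵥ b_E0 - y_I ⬝ᵥ (A_I0 *ᵥ z) := by rw [key, hzE]
  have hmono : y_I ⬝ᵥ b_I0 ≤ y_I ⬝ᵥ (A_I0 *ᵥ z) :=
    Finset.sum_le_sum fun i _ => mul_le_mul_of_nonneg_left (hzI i) (hyI i)
  linarith
end

section
/- (Infeasibility certificate, case 2.) Suppose the entering row a_p : Fin d → ℝ satisfies a_p = A_E0ᵀ *ᵥ y_E + A_I0ᵀ *ᵥ y_I for some y_E : Fin m₀ → ℝ and some y_I : Fin i₀ → ℝ with 0 ≤ y_I, and suppose x is a basic solution (A_E0 *ᵥ x = b_E0 and A_I0 *ᵥ x = b_I0) with a_p ⬝ᵥ x > b_p. Then there is no x̄ : Fin d → ℝ satisfying A_E0 *ᵥ x̄ = b_E0, A_I0 *ᵥ x̄ ≥ b_I0, and a_p ⬝ᵥ x̄ ≤ b_p; in particular, the linear program containing these constraints together with the equality constraint a_p ⬝ᵥ x̄ = b_p has no feasible solution.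 -/
open Matrix

theorem facet_infeasible_case2 (d m₀ i₀ : ℕ)
    (A_E0 : Matrix (Fin m₀) (Fin d) ℝ) (A_I0 : Matrix (Fin i₀) (Fin d) ℝ)
    (b_E0 : Fin m₀ → ℝ) (b_I0 : Fin i₀ → ℝ) (a_p : Fin d → ℝ) (b_p : ℝ)
    (y_E : Fin m₀ → ℝ) (y_I : Fin i₀ → ℝ) (hyI : 0 ≤ y_I)
    (hap : a_p = A_E0ᵀ *ᵥ y_E + A_I0ᵀ *ᵥ y_I)
    (x : Fin d → ℝ) (hxE : A_E0 *ᵥ x = b_E0) (hxI : A_I0 *ᵥ x = b_I0)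
    (hxp : a_p ⬝ᵥ x > b_p) :
    ¬ ∃ xbar : Fin d → ℝ, A_E0 *ᵥ xbar = b_E0 ∧ A_I0 *ᵥ xbar ≥ b_I0 ∧
      a_p ⬝ᵥ xbar ≤ b_p := by
  rintro ⟨z, hzE, hzI, hzp⟩
  have key : ∀ w : Fin d → ℝ,
      a_p ⬝ᵥ w = y_E ⬝ᵥ (A_E0 *ᵥ w) + y_I ⬝ᵥ (A_I0 *ᵥ w) := by
    intro w
    simp [hap, add_dotProduct, Matrix.dotProduct_mulVec, Matrix.mulVec_transpose]
  have hx := key x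
  have hz := key z
  rw [hxE, hxI] at hx
  rw [hzE] at hz
  have h1 : y_I ⬝ᵥ b_I0 ≤ y_I ⬝ᵥ (A_I0 *ᵥ z) :=
    Finset.sum_le_sum fun i _ => mul_le_mul_of_nonneg_left (hzI i) (hyI i)
  linarith
end

section
/- (Objective change after pivot, case 1.) Assume c = ∑ j, y_c j • a j and a_p = ∑ j, y_p j • a j, that the current basic solution x satisfies a j ⬝ᵥ x = b j for all j : Fin d, and that the next basic solution x' satisfies a_p ⬝ᵥ x' = b_p and a j ⬝ᵥ x' = b j for all j ≠ q. If y_p q > 0, y_c q ≥ 0, and a_p ⬝ᵥ x < b_p, then c ⬝ᵥ x' − c ⬝ᵥ x = (y_c q / y_p q) * (b_p − a_p ⬝ᵥ x), and in particular c ⬝ᵥ x' − c ⬝ᵥ x ≥ 0. -/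
open Matrix

theorem facet_objective_change_case1 (d : ℕ)
    (a : Fin d → Fin d → ℝ) (b : Fin d → ℝ) (q : Fin d)
    (a_p : Fin d → ℝ) (b_p : ℝ) (y_p y_c : Fin d → ℝ) (c : Fin d → ℝ)
    (hc : c = ∑ j, y_c j • a j) (hap : a_p = ∑ j, y_p j • a j)
    (x x' : Fin d → ℝ)
    (hx : ∀ j, a j ⬝ᵥ x = b j)
    (hx'p : a_p ⬝ᵥ x' = b_p)
    (hx' : ∀ j, j ≠ q → a j ⬝ᵥ x' = b j)
    (hpq : y_p q > 0) (hcq : y_c q ≥ 0) (hinfeas : a_p ⬝ᵥ x < b_p) :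
    c ⬝ᵥ x' - c ⬝ᵥ x = (y_c q / y_p q) * (b_p - a_p ⬝ᵥ x) ∧
    c ⬝ᵥ x' - c ⬝ᵥ x ≥ 0 := by
  have key : ∀ y : Fin d → ℝ, ∀ v : Fin d → ℝ,
      (∑ j, y j • a j) ⬝ᵥ v = ∑ j, y j * (a j ⬝ᵥ v) := by
    intro y v
    simp only [dotProduct, Finset.sum_apply, Pi.smul_apply, smul_eq_mul,
      Finset.mul_sum, Finset.sum_mul]
    rw [Finset.sum_comm]
    exact Finset.sum_congr rfl fun j _ => Finset.sum_congr rfl fun i _ => by ring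
  have hdiff : ∀ y : Fin d → ℝ,
      (∑ j, y j • a j) ⬝ᵥ x' - (∑ j, y j • a j) ⬝ᵥ x
        = y q * (a q ⬝ᵥ x' - a q ⬝ᵥ x) := by
    intro y
    rw [key, key, ← Finset.sum_sub_distrib]
    rw [Finset.sum_eq_single q]
    · ring
    · intro j _ hj
      rw [hx' j hj, hx j]; ring
    · intro h; exact absurd (Finset.mem_univ q) h
  have hp := hdiff y_p
  rw [← hap, hx'p] at hp
  have hcd := hdiff y_c
  rw [← hc] at hcd
  have hq : a q ⬝ᵥ x' - a q ⬝ᵥ x = (b_p - a_p ⬝ᵥ x) / y_p q := by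
    field_simp
    linarith [hp]
  rw [hq] at hcd
  constructor
  · rw [hcd]; ring
  · rw [hcd]
    have : (b_p - a_p ⬝ᵥ x) / y_p q ≥ 0 := div_nonneg (by linarith) hpq.le
    positivity
end

section
/- (Value of the leaving row at the new basic solution.) Assume a_p = ∑ j, y_p j • a j with y_p q ≠ 0, that x satisfies a j ⬝ᵥ x = b j for all j : Fin d, and that x' satisfies a_p ⬝ᵥ x' = b_p and a j ⬝ᵥ x' = b j for all j ≠ q. Then a q ⬝ᵥ x' = (1 / y_p q) * (b_p − a_p ⬝ᵥ x) + b q. In particular, if y_p q > 0 and a_p ⬝ᵥ x < b_p, then a q ⬝ᵥ x' > b q. -/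
/-!
Put `v = x' - x`. Every base row except `a q` is orthogonal to `v`, so expanding `a_p` in the
base gives `a_p ⬝ᵥ v = y_p q * (a q ⬝ᵥ v)`, i.e. `b_p - a_p ⬝ᵥ x = y_p q * (a q ⬝ᵥ x' - b q)`.
-/

open Matrix

section

variable {ι n R : Type*} [Fintype ι] [Fintype n]

theorem sum_smul_dotProduct [CommSemiring R] (y : ι → R) (a : ι → n → R) (v : n → R) :
    (∑ j, y j • a j) ⬝ᵥ v = ∑ j, y j * (a j ⬝ᵥ v) := by
  simp only [sum_dotProduct, smul_dotProduct, smul_eq_mul]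

theorem sum_smul_dotProduct_eq_of_dotProduct_eq_zero [CommSemiring R] [DecidableEq ι]
    (y : ι → R) (a : ι → n → R) (v : n → R) (q : ι) (hv : ∀ j, j ≠ q → a j ⬝ᵥ v = 0) :
    (∑ j, y j • a j) ⬝ᵥ v = y q * (a q ⬝ᵥ v) := by
  rw [sum_smul_dotProduct]
  exact Finset.sum_eq_single q (fun j _ hj => by rw [hv j hj, mul_zero])
    (fun hq => absurd (Finset.mem_univ q) hq)

end

theorem facet_leaving_value (d : ℕ)
    (a : Fin d → Fin d → ℝ) (b : Fin d → ℝ) (q : Fin d)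
    (a_p : Fin d → ℝ) (b_p : ℝ) (y_p : Fin d → ℝ)
    (hap : a_p = ∑ j, y_p j • a j) (hq : y_p q ≠ 0)
    (x x' : Fin d → ℝ)
    (hx : ∀ j, a j ⬝ᵥ x = b j)
    (hx'p : a_p ⬝ᵥ x' = b_p)
    (hx' : ∀ j, j ≠ q → a j ⬝ᵥ x' = b j) :
    a q ⬝ᵥ x' = (1 / y_p q) * (b_p - a_p ⬝ᵥ x) + b q ∧
    (y_p q > 0 → a_p ⬝ᵥ x < b_p → a q ⬝ᵥ x' > b q) := by
  have hstep : b_p - a_p ⬝ᵥ x = y_p q * (a q ⬝ᵥ x' - b q) := by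
    have hv : ∀ j, j ≠ q → a j ⬝ᵥ (x' - x) = 0 := fun j hj => by
      rw [dotProduct_sub, hx' j hj, hx j, sub_self]
    rw [← hx'p, ← dotProduct_sub, hap,
      sum_smul_dotProduct_eq_of_dotProduct_eq_zero y_p a _ q hv, dotProduct_sub, hx q]
  have hvalue : a q ⬝ᵥ x' = (1 / y_p q) * (b_p - a_p ⬝ᵥ x) + b q := by
    rw [hstep]
    field_simp
    ring
  refine ⟨hvalue, fun hpos hlt => ?_⟩
  rw [hvalue, gt_iff_lt, lt_add_iff_pos_left]
  exact mul_pos (one_div_pos.mpr hpos) (sub_pos.mpr hlt)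
end

section
/- (Leaving row becomes redundant, case 1.) Assume a_p = ∑ j, y_p j • a j, y_p q > 0, y_p j ≤ 0 for every j ∈ J with j ≠ q, and that the current basic solution x satisfies a j ⬝ᵥ x = b j for all j : Fin d together with a_p ⬝ᵥ x < b_p. Then the leaving constraint a q ⬝ᵥ · ≥ b q is redundant for the new base: every x̄ : Fin d → ℝ satisfying a j ⬝ᵥ x̄ = b j for all j ∉ J, a j ⬝ᵥ x̄ ≥ b j for all j ∈ J with j ≠ q, and a_p ⬝ᵥ x̄ ≥ b_p, also satisfies a q ⬝ᵥ x̄ > b q. -/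
open Matrix

theorem facet_leaving_redundant_case1 (d : ℕ)
    (a : Fin d → Fin d → ℝ) (b : Fin d → ℝ)
    (J : Finset (Fin d)) (q : Fin d) (hqJ : q ∈ J)
    (a_p : Fin d → ℝ) (b_p : ℝ) (y_p : Fin d → ℝ)
    (hap : a_p = ∑ j, y_p j • a j)
    (hpq : y_p q > 0) (hneg : ∀ j ∈ J, j ≠ q → y_p j ≤ 0)
    (x : Fin d → ℝ) (hx : ∀ j, a j ⬝ᵥ x = b j) (hxp : a_p ⬝ᵥ x < b_p) :
    ∀ xbar : Fin d → ℝ,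
      (∀ j ∉ J, a j ⬝ᵥ xbar = b j) →
      (∀ j ∈ J, j ≠ q → a j ⬝ᵥ xbar ≥ b j) →
      a_p ⬝ᵥ xbar ≥ b_p →
      a q ⬝ᵥ xbar > b q := by
  intro xbar h1 h2 h3
  have expand : ∀ v : Fin d → ℝ, a_p ⬝ᵥ v = ∑ j, y_p j * (a j ⬝ᵥ v) := by
    intro v
    simp only [hap, dotProduct, Finset.sum_apply, Pi.smul_apply, smul_eq_mul,
      Finset.mul_sum, Finset.sum_mul, mul_assoc]
    rw [Finset.sum_comm]
  have e1 : a_p ⬝ᵥ xbar = ∑ j, y_p j * (a j ⬝ᵥ xbar) := expand xbar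
  have e2 : a_p ⬝ᵥ x = ∑ j, y_p j * b j := by simp [expand x, hx]
  have key : 0 < ∑ j, y_p j * (a j ⬝ᵥ xbar - b j) := by
    have h := lt_of_lt_of_le hxp h3
    rw [e1, e2] at h
    have := sub_pos.mpr h
    rw [← Finset.sum_sub_distrib] at this
    simpa [mul_sub] using this
  have hq : 0 < y_p q * (a q ⬝ᵥ xbar - b q) := by
    by_contra h
    push_neg at h
    have hle : ∑ j, y_p j * (a j ⬝ᵥ xbar - b j) ≤ 0 := by
      apply Finset.sum_nonpos
      intro j _
      by_cases hj : j ∈ J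
      · by_cases hjq : j = q
        · subst hjq; exact h
        · have := hneg j hj hjq
          have := sub_nonneg.mpr (h2 j hj hjq)
          nlinarith
      · simp [h1 j hj]
    linarith
  by_contra h
  push_neg at h
  have : a q ⬝ᵥ xbar - b q ≤ 0 := by linarith
  nlinarith
end

section
/- (Objective change after pivot, case 2.) Assume c = ∑ j, y_c j • a j and a_p = ∑ j, y_p j • a j, that the current basic solution x satisfies a j ⬝ᵥ x = b j for all j : Fin d, and that the next basic solution x' satisfies a_p ⬝ᵥ x' = b_p and a j ⬝ᵥ x' = b j for all j ≠ q. If y_p q < 0, y_c q ≥ 0, and a_p ⬝ᵥ x > b_p, then c ⬝ᵥ x' − c ⬝ᵥ x = (y_c q / y_p q) * (b_p − a_p ⬝ᵥ x), and in particular c ⬝ᵥ x' − c ⬝ᵥ x ≥ 0. -/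
open Matrix

lemma sum_dot {d : ℕ} (y : Fin d → ℝ) (a : Fin d → Fin d → ℝ) (x : Fin d → ℝ) :
    (∑ j, y j • a j) ⬝ᵥ x = ∑ j, y j * (a j ⬝ᵥ x) := by
  simp [dotProduct, Finset.sum_apply, Finset.sum_mul, Finset.mul_sum]
  rw [Finset.sum_comm]
  simp [mul_assoc]

theorem facet_objective_change_case2 (d : ℕ)
    (a : Fin d → Fin d → ℝ) (b : Fin d → ℝ) (q : Fin d)
    (a_p : Fin d → ℝ) (b_p : ℝ) (y_p y_c : Fin d → ℝ) (c : Fin d → ℝ)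
    (hc : c = ∑ j, y_c j • a j) (hap : a_p = ∑ j, y_p j • a j)
    (x x' : Fin d → ℝ)
    (hx : ∀ j, a j ⬝ᵥ x = b j)
    (hx'p : a_p ⬝ᵥ x' = b_p)
    (hx' : ∀ j, j ≠ q → a j ⬝ᵥ x' = b j)
    (hpq : y_p q < 0) (hcq : y_c q ≥ 0) (hinfeas : a_p ⬝ᵥ x > b_p) :
    c ⬝ᵥ x' - c ⬝ᵥ x = (y_c q / y_p q) * (b_p - a_p ⬝ᵥ x) ∧
    c ⬝ᵥ x' - c ⬝ᵥ x ≥ 0 := by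
  have key : ∀ (y : Fin d → ℝ), (∑ j, y j • a j) ⬝ᵥ x' - (∑ j, y j • a j) ⬝ᵥ x
      = y q * (a q ⬝ᵥ x' - b q) := by
    intro y
    rw [sum_dot, sum_dot, ← Finset.sum_sub_distrib, Finset.sum_eq_single q]
    · rw [hx q, mul_sub]
    · intro j _ hj
      rw [hx' j hj, hx j, sub_self]
    · intro h; exact absurd (Finset.mem_univ q) h
  have hp : b_p - a_p ⬝ᵥ x = y_p q * (a q ⬝ᵥ x' - b q) := by
    rw [← hx'p]; conv_lhs => rw [hap]
    exact key y_p
  have hcd : c ⬝ᵥ x' - c ⬝ᵥ x = y_c q * (a q ⬝ᵥ x' - b q) := by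
    rw [hc]; exact key y_c
  have h1 : c ⬝ᵥ x' - c ⬝ᵥ x = (y_c q / y_p q) * (b_p - a_p ⬝ᵥ x) := by
    rw [hcd, hp, div_mul_eq_mul_div, mul_comm (y_p q), mul_div_assoc, mul_div_cancel_right₀ _ hpq.ne]
  refine ⟨h1, ?_⟩
  rw [h1]
  exact mul_nonneg_of_nonpos_of_nonpos (div_nonpos_of_nonneg_of_nonpos hcq hpq.le)
    (by linarith)
end

section
/- (Leaving row becomes redundant, case 2.) Assume a_p = ∑ j, y_p j • a j, y_p q < 0, y_p j ≥ 0 for every j ∈ J with j ≠ q, and that the current basic solution x satisfies a j ⬝ᵥ x = b j for all j : Fin d together with a_p ⬝ᵥ x > b_p. Then the leaving constraint a q ⬝ᵥ · ≥ b q is redundant for the new base: every x̄ : Fin d → ℝ satisfying a j ⬝ᵥ x̄ = b j for all j ∉ J, a j ⬝ᵥ x̄ ≥ b j for all j ∈ J with j ≠ q, and a_p ⬝ᵥ x̄ = b_p (the entering row is an equality constraint), also satisfies a q ⬝ᵥ x̄ > b q. (This is the paper's case-2 redundancy theorem with the sign condition on y_p j for j ≠ q stated so as to make the claim correct.) -/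
open Matrix

theorem facet_leaving_redundant_case2 (d : ℕ)
    (a : Fin d → Fin d → ℝ) (b : Fin d → ℝ)
    (J : Finset (Fin d)) (q : Fin d) (hqJ : q ∈ J)
    (a_p : Fin d → ℝ) (b_p : ℝ) (y_p : Fin d → ℝ)
    (hap : a_p = ∑ j, y_p j • a j)
    (hpq : y_p q < 0) (hpos : ∀ j ∈ J, j ≠ q → y_p j ≥ 0)
    (x : Fin d → ℝ) (hx : ∀ j, a j ⬝ᵥ x = b j) (hxp : a_p ⬝ᵥ x > b_p) :
    ∀ xbar : Fin d → ℝ,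
      (∀ j ∉ J, a j ⬝ᵥ xbar = b j) →
      (∀ j ∈ J, j ≠ q → a j ⬝ᵥ xbar ≥ b j) →
      a_p ⬝ᵥ xbar = b_p →
      a q ⬝ᵥ xbar > b q := by
  intro xbar h1 h2 h3
  have hdot : ∀ v : Fin d → ℝ, (∑ j, y_p j • a j) ⬝ᵥ v = ∑ j, y_p j * (a j ⬝ᵥ v) := by
    intro v
    simp only [dotProduct, Finset.sum_apply, Pi.smul_apply, smul_eq_mul, Finset.sum_mul,
      Finset.mul_sum]
    rw [Finset.sum_comm]
    exact Finset.sum_congr rfl fun j _ => Finset.sum_congr rfl fun i _ => by ring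
  have hx' : (∑ j, y_p j * b j) > b_p := by
    rw [hap, hdot] at hxp
    simpa [hx] using hxp
  have hxb : (∑ j, y_p j * (a j ⬝ᵥ xbar)) = b_p := by
    rw [hap, hdot] at h3
    exact h3
  have key : (∑ j, y_p j * (a j ⬝ᵥ xbar - b j)) < 0 := by
    have : (∑ j, y_p j * (a j ⬝ᵥ xbar - b j))
        = (∑ j, y_p j * (a j ⬝ᵥ xbar)) - (∑ j, y_p j * b j) := by
      rw [← Finset.sum_sub_distrib]
      congr 1; ext j; ring
    rw [this, hxb]
    linarith
  have hsplit : (∑ j, y_p j * (a j ⬝ᵥ xbar - b j))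
      = y_p q * (a q ⬝ᵥ xbar - b q)
        + ∑ j ∈ Finset.univ.erase q, y_p j * (a j ⬝ᵥ xbar - b j) := by
    exact (Finset.add_sum_erase _ _ (Finset.mem_univ q)).symm
  have hrest : (0 : ℝ) ≤ ∑ j ∈ Finset.univ.erase q, y_p j * (a j ⬝ᵥ xbar - b j) := by
    apply Finset.sum_nonneg
    intro j hj
    have hjq : j ≠ q := Finset.ne_of_mem_erase hj
    by_cases hJ : j ∈ J
    · exact mul_nonneg (hpos j hJ hjq) (by linarith [h2 j hJ hjq])
    · rw [h1 j hJ]; simp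
  have hmul : y_p q * (a q ⬝ᵥ xbar - b q) < 0 := by linarith [hsplit ▸ key]
  nlinarith [hmul, hpq]
end
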